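/- Let T ∈ ℝ^{m×m} be symmetric, tridiagonal (T_{ij} = 0 whenever |i − j| > 1), and positive definite, with all eigenvalues contained in an interval [a, b] with 0 < a ≤ b. For 0 ≤ k ≤ m−1 let T_k denote the leading (k+1)×(k+1) principal submatrix of T. Then e₁ᵀ·T^{−1}·e₁ − e₁ᵀ·T_k^{−1}·e₁ ≤ 4·‖T^{−1}·e₁‖·((√(b/a) − 1)/(√(b/a) + 1))^{2(k+1)}. -/

import Mathlib

open Matrix

noncomputable section

/-- Euclidean 2-norm of a finitely indexed real vector. -/
def vecEnorm {ι : Type*} [Fintype ι] (v : ι → ℝ) : ℝ := ‖(WithLp.equiv 2 (ι → ℝ)).symm v‖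


open Polynomial in
lemma T_real_cosh (n : ℤ) (t : ℝ) :
    (Polynomial.Chebyshev.T ℝ n).eval (Real.cosh t) = Real.cosh (n * t) := by
  have h := Polynomial.Chebyshev.T_complex_cos (θ := (t : ℂ) * Complex.I) n
  rw [Complex.cos_mul_I] at h
  have h2 : (n : ℂ) * ((t : ℂ) * Complex.I) = ((((n : ℝ)) * t : ℝ) : ℂ) * Complex.I := by
    push_cast; ring
  rw [h2, Complex.cos_mul_I] at h
  have h3 := Polynomial.Chebyshev.complex_ofReal_eval_T (Real.cosh t) n
  rw [Complex.ofReal_cosh] at h3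
  have h4 := h3.trans h
  rw [← Complex.ofReal_cosh] at h4
  exact_mod_cast h4


open Polynomial in
lemma natDegree_cheb_le (n : ℕ) : (Polynomial.Chebyshev.T ℝ (n : ℤ)).natDegree ≤ n := by
  induction n using Nat.strong_induction_on with
  | _ n ih =>
    match n with
    | 0 => simp [Polynomial.Chebyshev.T_zero]
    | 1 => simp [Polynomial.Chebyshev.T_one]
    | (n + 2) =>
      have h : ((n + 2 : ℕ) : ℤ) = (n : ℤ) + 2 := by push_cast; ring
      rw [h, Polynomial.Chebyshev.T_add_two]
      refine le_trans (Polynomial.natDegree_sub_le _ _) ?_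
      have h1 : (2 * X * Polynomial.Chebyshev.T ℝ ((n : ℤ) + 1)).natDegree ≤ n + 2 := by
        refine le_trans (Polynomial.natDegree_mul_le) ?_
        have := ih (n + 1) (by omega)
        have hc : ((n + 1 : ℕ) : ℤ) = (n : ℤ) + 1 := by push_cast; ring
        rw [hc] at this
        have h2X : (2 * X : ℝ[X]).natDegree ≤ 1 := by
          refine le_trans (Polynomial.natDegree_mul_le) ?_
          simp
        omega
      have h2 : (Polynomial.Chebyshev.T ℝ (n : ℤ)).natDegree ≤ n + 2 :=
        le_trans (ih n (by omega)) (by omega)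
      simp [h1, h2]

open Polynomial in
lemma cheb_poly_bound (n : ℕ) (a b : ℝ) (ha : 0 < a) (hab : a ≤ b) :
    ∃ q : Polynomial ℝ, q.eval 0 = 1 ∧ q.natDegree ≤ n + 1 ∧
      ∀ t ∈ Set.Icc a b, |q.eval t| ≤
        2 * ((Real.sqrt (b/a) - 1) / (Real.sqrt (b/a) + 1)) ^ (n+1) := by
  rcases eq_or_lt_of_le hab with rfl | hlt
  · refine ⟨(1 - Polynomial.C a⁻¹ * Polynomial.X) ^ (n+1), by simp, ?_, ?_⟩
    · refine le_trans (Polynomial.natDegree_pow_le) ?_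
      have h1 : (1 - Polynomial.C a⁻¹ * Polynomial.X : ℝ[X]).natDegree ≤ 1 := by
        refine le_trans (Polynomial.natDegree_sub_le _ _) ?_
        simp only [Polynomial.natDegree_one, Nat.max_le, Nat.zero_le, true_and]
        exact le_trans (Polynomial.natDegree_C_mul_le _ _) (by simp)
      calc (n+1) * (1 - Polynomial.C a⁻¹ * Polynomial.X : ℝ[X]).natDegree ≤ (n+1) * 1 :=
        Nat.mul_le_mul_left _ h1
      _ = n + 1 := by ring
    · intro t ht
      have hta : t = a := le_antisymm ht.2 ht.1
      subst hta
      have h1 : Real.sqrt (t / t) = 1 := by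
        rw [div_self ha.ne']; exact Real.sqrt_one
      rw [h1]
      simp [ha.ne', sub_self, zero_pow (Nat.succ_ne_zero n)]
  · -- a < b
    set s := Real.sqrt (b / a) with hs
    have hba : 1 < b / a := (one_lt_div ha).2 hlt
    have hs1 : 1 < s := by
      have := Real.sqrt_lt_sqrt (by norm_num) hba
      simpa using this
    have hs0 : 0 < s - 1 := by linarith
    have hs0' : 0 < s + 1 := by linarith
    set ρ := (s - 1) / (s + 1) with hρ
    have hρpos : 0 < ρ := div_pos hs0 hs0'
    set t0 := Real.log ((s + 1) / (s - 1)) with ht0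
    have hexp : Real.exp t0 = (s + 1) / (s - 1) := Real.exp_log (div_pos hs0' hs0)
    have hexpneg : Real.exp (-t0) = ρ := by
      rw [Real.exp_neg, hexp, hρ, inv_div]
    have hs2 : s ^ 2 = b / a := Real.sq_sqrt (by positivity)
    have hbpos : 0 < b - a := by linarith
    have hb : b = a * s ^ 2 := by
      field_simp at hs2; linarith [hs2]
    have hcosh : Real.cosh t0 = (b + a) / (b - a) := by
      rw [Real.cosh_eq, hexp, hexpneg, hρ, hb]
      have hne1 : s - 1 ≠ 0 := hs0.ne'
      have hne2 : s + 1 ≠ 0 := hs0'.ne'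
      have hne3 : a * s ^ 2 - a ≠ 0 := by
        have : a * s ^ 2 - a = a * ((s - 1) * (s + 1)) := by ring
        rw [this]
        exact mul_ne_zero ha.ne' (mul_ne_zero hne1 hne2)
      rw [div_add_div _ _ hne1 hne2, div_div,
        div_eq_div_iff (mul_ne_zero (mul_ne_zero hne1 hne2) two_ne_zero) hne3]
      ring
    set N := n + 1 with hN
    set c : ℝ := (b + a) / (b - a) with hc
    set D := (Polynomial.Chebyshev.T ℝ (N : ℤ)).eval c with hD
    have hDcosh : D = Real.cosh (N * t0) := by
      rw [hD, ← hcosh, T_real_cosh (N : ℤ) t0]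
      norm_num
    have hexpN : Real.exp ((N : ℝ) * t0) = (ρ ^ N)⁻¹ := by
      rw [Real.exp_nat_mul, hexp, ← inv_div (s - 1) (s + 1), ← hρ, inv_pow]
    have hDlow : (2 * ρ ^ N)⁻¹ ≤ D := by
      rw [hDcosh, Real.cosh_eq]
      have hpos := Real.exp_pos (-((N : ℝ) * t0))
      have h2 : (2 * ρ ^ N)⁻¹ = Real.exp ((N:ℝ) * t0) / 2 := by
        rw [hexpN]; rw [mul_inv]; ring
      rw [h2]
      linarith
    have hDpos : 0 < D := lt_of_lt_of_le (by positivity) hDlow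
    have hDinv : D⁻¹ ≤ 2 * ρ ^ N := by
      rw [← inv_inv (2 * ρ ^ N)]
      exact inv_anti₀ (by positivity) hDlow
    refine ⟨Polynomial.C D⁻¹ *
      ((Polynomial.Chebyshev.T ℝ (N : ℤ)).comp
        (Polynomial.C c - Polynomial.C (2 / (b - a)) * Polynomial.X)), ?_, ?_, ?_⟩
    · rw [Polynomial.eval_mul, Polynomial.eval_C, Polynomial.eval_comp]
      simp only [Polynomial.eval_sub, Polynomial.eval_mul, Polynomial.eval_C, Polynomial.eval_X,
        mul_zero, sub_zero]
      rw [← hD]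
      exact inv_mul_cancel₀ hDpos.ne'
    · refine le_trans (Polynomial.natDegree_C_mul_le _ _) ?_
      refine le_trans (Polynomial.natDegree_comp_le) ?_
      have h1 : (Polynomial.C c - Polynomial.C (2 / (b - a)) * Polynomial.X : ℝ[X]).natDegree ≤ 1 := by
        refine le_trans (Polynomial.natDegree_sub_le _ _) ?_
        simp only [Polynomial.natDegree_C, Nat.max_le, Nat.zero_le, true_and]
        exact le_trans (Polynomial.natDegree_C_mul_le _ _) (by simp)
      calc (Polynomial.Chebyshev.T ℝ (N:ℤ)).natDegree *
            (Polynomial.C c - Polynomial.C (2 / (b - a)) * Polynomial.X : ℝ[X]).natDegree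
          ≤ N * 1 := Nat.mul_le_mul (natDegree_cheb_le N) h1
        _ = n + 1 := by omega
    · intro t ht
      have hform : c - 2 / (b - a) * t = (b + a - 2 * t) / (b - a) := by
        rw [hc]; field_simp
      have harg1 : (-1 : ℝ) ≤ c - 2 / (b - a) * t := by
        rw [hform, le_div_iff₀ hbpos]
        have := ht.2
        linarith
      have harg2 : c - 2 / (b - a) * t ≤ 1 := by
        rw [hform, div_le_one hbpos]
        have := ht.1
        linarith
      set θ := Real.arccos (c - 2 / (b - a) * t) with hθ
      have hcos : Real.cos θ = c - 2 / (b - a) * t := Real.cos_arccos harg1 harg2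
      have heval : ((Polynomial.Chebyshev.T ℝ (N : ℤ)).eval (c - 2 / (b-a) * t)) =
          Real.cos (N * θ) := by
        rw [← hcos, Polynomial.Chebyshev.T_real_cos]
        norm_num
      rw [Polynomial.eval_mul, Polynomial.eval_C, Polynomial.eval_comp]
      simp only [Polynomial.eval_sub, Polynomial.eval_mul, Polynomial.eval_C, Polynomial.eval_X]
      rw [heval, abs_mul, abs_of_pos (inv_pos.2 hDpos)]
      calc D⁻¹ * |Real.cos (N * θ)| ≤ D⁻¹ * 1 := by
            have := Real.abs_cos_le_one ((N : ℝ) * θ)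
            exact mul_le_mul_of_nonneg_left this (le_of_lt (inv_pos.2 hDpos))
        _ = D⁻¹ := mul_one _
        _ ≤ 2 * ρ ^ N := hDinv

open Polynomial in
lemma matrix_sum_mulVec {n : ℕ} (s : Finset ℕ) (A : ℕ → Matrix (Fin n) (Fin n) ℝ)
    (v : Fin n → ℝ) : (∑ j ∈ s, A j).mulVec v = ∑ j ∈ s, (A j).mulVec v := by
  funext l
  simp only [Matrix.mulVec, dotProduct, Matrix.sum_apply, Finset.sum_apply, Finset.sum_mul]
  exact Finset.sum_comm


open Polynomial in
lemma spectral_bound {m : ℕ} (T : Matrix (Fin m) (Fin m) ℝ) (hA : T.IsHermitian)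
    (a b M : ℝ) (ha : 0 ≤ a)
    (hbound : ∀ i, hA.eigenvalues i ∈ Set.Icc a b)
    (q : Polynomial ℝ) (hM : ∀ t ∈ Set.Icc a b, |q.eval t| ≤ M)
    (x : Fin m → ℝ) :
    ((Polynomial.aeval T q).mulVec x) ⬝ᵥ T.mulVec ((Polynomial.aeval T q).mulVec x) ≤
      M ^ 2 * (x ⬝ᵥ T.mulVec x) := by
  classical
  set μ : Fin m → ℝ := hA.eigenvalues with hμ
  set u : Fin m → (Fin m → ℝ) := fun i => ⇑(hA.eigenvectorBasis i) with hu
  -- orthonormality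
  have horth := hA.eigenvectorBasis.orthonormal
  rw [orthonormal_iff_ite] at horth
  have h1 : ∀ i j, u i ⬝ᵥ u j = if i = j then 1 else 0 := by
    intro i j
    have h := horth i j
    simpa [hu, PiLp.inner_apply, RCLike.inner_apply, dotProduct, mul_comm] using h
  -- completeness
  have h3 : ∀ v : Fin m → ℝ, ∑ i, (u i ⬝ᵥ v) • u i = v := by
    intro v
    have h := hA.eigenvectorBasis.sum_repr' ((WithLp.equiv 2 (Fin m → ℝ)).symm v)
    have hco : ∀ i, (inner ℝ (hA.eigenvectorBasis i) ((WithLp.equiv 2 (Fin m → ℝ)).symm v) : ℝ)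
        = u i ⬝ᵥ v := by
      intro i
      simp only [PiLp.inner_apply, RCLike.inner_apply, starRingEnd_apply, star_trivial]
      exact Finset.sum_congr rfl fun _ _ => mul_comm _ _
    simp only [hco] at h
    have h' := congrArg WithLp.ofLp h
    rw [WithLp.ofLp_sum] at h'
    simp only [WithLp.ofLp_smul] at h'
    exact h'
  -- eigen action
  have heigvec : ∀ i, T.mulVec (u i) = μ i • u i := fun i => hA.mulVec_eigenvectorBasis i
  -- sum lemmas
  have hdsum1 : ∀ (f : Fin m → (Fin m → ℝ)) (w : Fin m → ℝ),
      (∑ i, f i) ⬝ᵥ w = ∑ i, f i ⬝ᵥ w := by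
    intro f w
    simp only [dotProduct, Finset.sum_apply, Finset.sum_mul]
    exact Finset.sum_comm
  have hdsum2 : ∀ (v : Fin m → ℝ) (f : Fin m → (Fin m → ℝ)),
      v ⬝ᵥ (∑ i, f i) = ∑ i, v ⬝ᵥ f i := by
    intro v f
    simp only [dotProduct, Finset.sum_apply, Finset.mul_sum]
    exact Finset.sum_comm
  have hMsum : ∀ (s : Finset ℕ) (A : ℕ → Matrix (Fin m) (Fin m) ℝ) (v : Fin m → ℝ),
      (∑ j ∈ s, A j).mulVec v = ∑ j ∈ s, (A j).mulVec v := by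
    intro s A v
    funext l
    simp only [Matrix.mulVec, dotProduct, Matrix.sum_apply, Finset.sum_apply, Finset.sum_mul]
    exact Finset.sum_comm
  -- sums through mulVec
  have hsum : ∀ (A : Matrix (Fin m) (Fin m) ℝ) (f : Fin m → (Fin m → ℝ)),
      A.mulVec (∑ i, f i) = ∑ i, A.mulVec (f i) := by
    intro A f
    exact map_sum A.mulVecLin f Finset.univ
  -- powers
  have hpow : ∀ (j : ℕ) (i : Fin m), (T ^ j).mulVec (u i) = (μ i ^ j) • u i := by
    intro j
    induction j with
    | zero => intro i; simp
    | succ j ih =>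
      intro i
      have hstep : (T ^ (j+1)).mulVec (u i) = (T ^ j).mulVec (T.mulVec (u i)) := by
        rw [Matrix.mulVec_mulVec, ← pow_succ]
      rw [hstep, heigvec i, Matrix.mulVec_smul, ih i, smul_smul, ← pow_succ']
  -- polynomial action
  have hQ : ∀ i, (Polynomial.aeval T q).mulVec (u i) = (q.eval (μ i)) • u i := by
    intro i
    rw [Polynomial.aeval_eq_sum_range, Polynomial.eval_eq_sum_range]
    rw [hMsum]
    simp only [Matrix.smul_mulVec, hpow, smul_smul, Finset.sum_smul]
  -- dot products of expansions
  have hdot : ∀ d e : Fin m → ℝ, (∑ i, d i • u i) ⬝ᵥ (∑ i, e i • u i) = ∑ i, d i * e i := by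
    intro d e
    rw [hdsum1]
    have : ∀ i, (d i • u i) ⬝ᵥ (∑ j, e j • u j) = d i * e i := by
      intro i
      rw [hdsum2]
      have h2 : ∀ j, (d i • u i) ⬝ᵥ (e j • u j) = d i * e j * (if i = j then 1 else 0) := by
        intro j
        rw [smul_dotProduct, dotProduct_smul, h1 i j, smul_eq_mul, smul_eq_mul]
        ring
      simp only [h2]
      simp
    simp only [this]
  -- coefficients
  set c : Fin m → ℝ := fun i => u i ⬝ᵥ x with hc
  have hx : x = ∑ i, c i • u i := (h3 x).symm
  have hTx : T.mulVec x = ∑ i, (c i * μ i) • u i := by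
    rw [hx, hsum]
    congr 1
    funext i
    rw [Matrix.mulVec_smul, heigvec i, smul_smul]
  have hw : (Polynomial.aeval T q).mulVec x = ∑ i, (c i * q.eval (μ i)) • u i := by
    rw [hx, hsum]
    congr 1
    funext i
    rw [Matrix.mulVec_smul, hQ i, smul_smul]
  have hTw : T.mulVec ((Polynomial.aeval T q).mulVec x)
      = ∑ i, ((c i * q.eval (μ i)) * μ i) • u i := by
    rw [hw, hsum]
    congr 1
    funext i
    rw [Matrix.mulVec_smul, heigvec i, smul_smul]
  have e1 : ((Polynomial.aeval T q).mulVec x) ⬝ᵥ T.mulVec ((Polynomial.aeval T q).mulVec x)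
      = ∑ i, (c i * q.eval (μ i)) * ((c i * q.eval (μ i)) * μ i) := by
    rw [hTw, hw, hdot]
  have e2 : x ⬝ᵥ T.mulVec x = ∑ i, c i * (c i * μ i) := by
    rw [hTx]
    nth_rewrite 1 [hx]
    rw [hdot]
  rw [e1, e2, Finset.mul_sum]
  apply Finset.sum_le_sum
  intro i _
  have hμi := hbound i
  have hqi := hM (μ i) hμi
  have hμnn : 0 ≤ μ i := le_trans ha hμi.1
  have habs : (q.eval (μ i))^2 ≤ M^2 := sq_le_sq' (by cases abs_le.1 hqi; linarith) (by
    cases abs_le.1 hqi; linarith)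
  nlinarith [sq_nonneg (c i), sq_nonneg (q.eval (μ i)), mul_nonneg hμnn (sq_nonneg (c i))]

open Polynomial in
/-- CG-type a-priori bound: for a symmetric tridiagonal positive definite `T` with all
eigenvalues in `[a, b]`, `0 < a ≤ b`, and `T_k` its leading `(k+1)×(k+1)` principal
submatrix, `e₁ᵀ T⁻¹ e₁ − e₁ᵀ T_k⁻¹ e₁ ≤ 4 ‖T⁻¹ e₁‖ ((√(b/a) − 1)/(√(b/a) + 1))^{2(k+1)}`. -/
theorem stmt_11 {m k : ℕ} (hk : k + 1 ≤ m)
    (T : Matrix (Fin m) (Fin m) ℝ) (hTsymm : T.IsSymm)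
    (htri : ∀ i j : Fin m, ((i : ℕ) + 1 < (j : ℕ) ∨ (j : ℕ) + 1 < (i : ℕ)) → T i j = 0)
    (hTpd : T.PosDef)
    (a b : ℝ) (ha : 0 < a) (hab : a ≤ b)
    (heig : ∀ (μ : ℝ) (v : Fin m → ℝ), v ≠ 0 → T.mulVec v = μ • v → μ ∈ Set.Icc a b)
    (Tk : Matrix (Fin (k + 1)) (Fin (k + 1)) ℝ)
    (hTk : Tk = T.submatrix (Fin.castLE hk) (Fin.castLE hk))
    (e1m : Fin m → ℝ) (he1m : e1m = fun i : Fin m => if (i : ℕ) = 0 then (1 : ℝ) else 0)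
    (e1k : Fin (k + 1) → ℝ)
    (he1k : e1k = fun i : Fin (k + 1) => if (i : ℕ) = 0 then (1 : ℝ) else 0) :
    e1m ⬝ᵥ T⁻¹.mulVec e1m - e1k ⬝ᵥ Tk⁻¹.mulVec e1k ≤
      4 * vecEnorm (T⁻¹.mulVec e1m) *
        ((Real.sqrt (b / a) - 1) / (Real.sqrt (b / a) + 1)) ^ (2 * (k + 1)) := by
  classical
  have hm0 : 0 < m := lt_of_lt_of_le (Nat.succ_pos k) hk
  have hsymE : ∀ i j : Fin m, T j i = T i j := fun i j => congrFun (congrFun hTsymm.eq i) j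
  have hdet : IsUnit T.det := isUnit_iff_ne_zero.2 hTpd.det_pos.ne'
  set x : Fin m → ℝ := T⁻¹.mulVec e1m with hxdef
  have hTx : T.mulVec x = e1m := by
    rw [hxdef, Matrix.mulVec_mulVec, Matrix.mul_nonsing_inv _ hdet, Matrix.one_mulVec]
  have hsymdot : ∀ v w : Fin m → ℝ, v ⬝ᵥ T.mulVec w = T.mulVec v ⬝ᵥ w := by
    intro v w
    rw [Matrix.dotProduct_mulVec, ← Matrix.mulVec_transpose, hTsymm.eq]
  -- extension operator
  set ext0 : (Fin (k+1) → ℝ) → (Fin m → ℝ) :=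
    fun z j => if h : (j : ℕ) < k + 1 then z ⟨(j : ℕ), h⟩ else 0 with hext0
  have hext_cast : ∀ (z : Fin (k+1) → ℝ) (i : Fin (k+1)), ext0 z (Fin.castLE hk i) = z i := by
    intro z i
    simp only [hext0]
    rw [dif_pos (show ((Fin.castLE hk i : Fin m) : ℕ) < k + 1 from i.isLt)]
    congr 1
  have hext_zero : ∀ (z : Fin (k+1) → ℝ) (j : Fin m), k + 1 ≤ (j : ℕ) → ext0 z j = 0 := by
    intro z j hj
    simp only [hext0]
    rw [dif_neg (by omega)]
  -- sum restriction
  have hsum_ext : ∀ g : Fin m → ℝ, (∀ j : Fin m, k + 1 ≤ (j : ℕ) → g j = 0) →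
      ∑ j, g j = ∑ i : Fin (k+1), g (Fin.castLE hk i) := by
    intro g hg
    have h1 : ∑ i : Fin (k+1), g (Fin.castLE hk i)
        = ∑ j ∈ Finset.univ.map (Fin.castLEEmb hk), g j := by
      rw [Finset.sum_map]
      rfl
    rw [h1]
    refine (Finset.sum_subset (Finset.subset_univ _) ?_).symm
    intro j _ hj
    apply hg
    by_contra hcon
    push_neg at hcon
    apply hj
    rw [Finset.mem_map]
    exact ⟨⟨(j : ℕ), hcon⟩, Finset.mem_univ _, by apply Fin.ext; simp⟩
  have hdot_e1 : ∀ z : Fin (k+1) → ℝ, ext0 z ⬝ᵥ e1m = z ⬝ᵥ e1k := by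
    intro z
    rw [dotProduct, dotProduct,
      hsum_ext _ (fun j hj => by rw [hext_zero z j hj, zero_mul])]
    apply Finset.sum_congr rfl
    intro i _
    rw [hext_cast]
    congr 1
    rw [he1m, he1k]
    simp
  have hquad : ∀ z : Fin (k+1) → ℝ, ext0 z ⬝ᵥ T.mulVec (ext0 z) = z ⬝ᵥ Tk.mulVec z := by
    intro z
    rw [dotProduct, dotProduct,
      hsum_ext _ (fun j hj => by rw [hext_zero z j hj, zero_mul])]
    apply Finset.sum_congr rfl
    intro i _
    rw [hext_cast]
    congr 1
    show (fun l => T (Fin.castLE hk i) l) ⬝ᵥ ext0 z = (fun l => Tk i l) ⬝ᵥ z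
    rw [dotProduct, dotProduct,
      hsum_ext _ (fun j hj => by rw [hext_zero z j hj, mul_zero])]
    apply Finset.sum_congr rfl
    intro i' _
    rw [hext_cast, hTk]
    rfl
  -- Tk is positive definite
  have hTkherm : Tk.IsHermitian := by
    ext i j
    rw [Matrix.conjTranspose_apply, star_trivial, hTk]
    exact hsymE _ _
  have hTkpd : Tk.PosDef := by
    refine Matrix.PosDef.of_dotProduct_mulVec_pos hTkherm ?_
    intro z hz
    have hnz : ext0 z ≠ 0 := by
      intro h0
      apply hz
      funext i
      have h2 := congrFun h0 (Fin.castLE hk i)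
      rw [hext_cast] at h2
      exact h2
    have hp := hTpd.dotProduct_mulVec_pos hnz
    have hstar : star (ext0 z) = ext0 z := funext fun _ => star_trivial _
    have hstarz : star z = z := funext fun _ => star_trivial _
    rw [hstar, hquad z] at hp
    rw [hstarz]
    exact hp
  have hTkdet : IsUnit Tk.det := isUnit_iff_ne_zero.2 hTkpd.det_pos.ne'
  set z0 : Fin (k+1) → ℝ := Tk⁻¹.mulVec e1k with hz0def
  have hTkz0 : Tk.mulVec z0 = e1k := by
    rw [hz0def, Matrix.mulVec_mulVec, Matrix.mul_nonsing_inv _ hTkdet, Matrix.one_mulVec]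
  have hTksymm : Tkᵀ = Tk := by
    ext i j
    rw [Matrix.transpose_apply, hTk]
    exact hsymE _ _
  have hsymdotk : ∀ v w : Fin (k+1) → ℝ, v ⬝ᵥ Tk.mulVec w = Tk.mulVec v ⬝ᵥ w := by
    intro v w
    rw [Matrix.dotProduct_mulVec, ← Matrix.mulVec_transpose, hTksymm]
  -- step A
  have stepA : ∀ z : Fin (k+1) → ℝ,
      e1m ⬝ᵥ x - e1k ⬝ᵥ z0 ≤ (x - ext0 z) ⬝ᵥ T.mulVec (x - ext0 z) := by
    intro z
    have hxTx : x ⬝ᵥ T.mulVec x = e1m ⬝ᵥ x := by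
      rw [hsymdot, hTx]
    have hxTy : x ⬝ᵥ T.mulVec (ext0 z) = e1k ⬝ᵥ z := by
      rw [hsymdot, hTx, dotProduct_comm, hdot_e1, dotProduct_comm]
    have hyTx : ext0 z ⬝ᵥ T.mulVec x = e1k ⬝ᵥ z := by
      rw [hTx, hdot_e1, dotProduct_comm]
    have expand : (x - ext0 z) ⬝ᵥ T.mulVec (x - ext0 z)
        = e1m ⬝ᵥ x - 2 * (e1k ⬝ᵥ z) + z ⬝ᵥ Tk.mulVec z := by
      rw [Matrix.mulVec_sub, sub_dotProduct, dotProduct_sub,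
        dotProduct_sub, hxTx, hxTy, hyTx, hquad]
      ring
    rw [expand]
    have key : 0 ≤ (z - z0) ⬝ᵥ Tk.mulVec (z - z0) := by
      rcases eq_or_ne (z - z0) 0 with h | h
      · rw [h]
        simp
      · have := hTkpd.dotProduct_mulVec_pos h
        rw [show star (z - z0) = z - z0 from funext fun _ => star_trivial _] at this
        exact this.le
    have expand2 : (z - z0) ⬝ᵥ Tk.mulVec (z - z0)
        = z ⬝ᵥ Tk.mulVec z - 2 * (e1k ⬝ᵥ z) + e1k ⬝ᵥ z0 := by
      have h1 : z ⬝ᵥ Tk.mulVec z0 = e1k ⬝ᵥ z := by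
        rw [hTkz0, dotProduct_comm]
      have h2 : z0 ⬝ᵥ Tk.mulVec z = e1k ⬝ᵥ z := by
        rw [hsymdotk, hTkz0]
      have h3 : z0 ⬝ᵥ Tk.mulVec z0 = e1k ⬝ᵥ z0 := by
        rw [hTkz0, dotProduct_comm]
      rw [Matrix.mulVec_sub, sub_dotProduct, dotProduct_sub,
        dotProduct_sub, h1, h2, h3]
      ring
    rw [expand2] at key
    linarith
  -- Chebyshev polynomial
  obtain ⟨q, hq0, hqdeg, hqbound⟩ := cheb_poly_bound k a b ha hab
  have hdvd : Polynomial.X ∣ (1 - q) := by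
    rw [Polynomial.X_dvd_iff, Polynomial.coeff_sub, Polynomial.coeff_one_zero,
      Polynomial.coeff_zero_eq_eval_zero, hq0, sub_self]
  obtain ⟨p, hp⟩ := hdvd
  have hpdeg : p.natDegree ≤ k := by
    by_cases hp0 : p = 0
    · simp [hp0]
    · have h1 : (1 - q).natDegree ≤ k + 1 :=
        le_trans (Polynomial.natDegree_sub_le _ _) (by simp [hqdeg])
      rw [hp, Polynomial.natDegree_mul Polynomial.X_ne_zero hp0, Polynomial.natDegree_X] at h1
      omega
  -- support of powers
  have hpowsupp : ∀ (j : ℕ) (i : Fin m), (j : ℕ) < (i : ℕ) → (T ^ j).mulVec e1m i = 0 := by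
    intro j
    induction j with
    | zero =>
      intro i hi
      rw [pow_zero, Matrix.one_mulVec, he1m]
      simp only []
      rw [if_neg (by omega)]
    | succ j ih =>
      intro i hi
      have hstep : (T ^ (j+1)).mulVec e1m = T.mulVec ((T ^ j).mulVec e1m) := by
        rw [Matrix.mulVec_mulVec, ← pow_succ']
      rw [hstep]
      show (fun l => T i l) ⬝ᵥ ((T ^ j).mulVec e1m) = 0
      rw [dotProduct]
      apply Finset.sum_eq_zero
      intro l _
      by_cases hl : (j : ℕ) < (l : ℕ)
      · rw [ih l hl, mul_zero]
      · have hlow : (l : ℕ) + 1 < (i : ℕ) := by omega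
        rw [htri i l (Or.inr hlow), zero_mul]
  have hy_supp : ∀ i : Fin m, k + 1 ≤ (i : ℕ) → (Polynomial.aeval T p).mulVec e1m i = 0 := by
    intro i hi
    rw [Polynomial.aeval_eq_sum_range, matrix_sum_mulVec]
    rw [Finset.sum_apply]
    apply Finset.sum_eq_zero
    intro j hj
    rw [Finset.mem_range] at hj
    rw [Matrix.smul_mulVec]
    have : (T ^ j).mulVec e1m i = 0 := hpowsupp j i (by omega)
    simp [this]
  -- defining z from the polynomial
  set w : Fin m → ℝ := (Polynomial.aeval T q).mulVec x with hwdef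
  have hxw : x - w = (Polynomial.aeval T p).mulVec e1m := by
    have h1 : x - w = (Polynomial.aeval T (1 - q)).mulVec x := by
      rw [map_sub, _root_.map_one, Matrix.sub_mulVec, Matrix.one_mulVec]
    have h2 : (1 : Polynomial ℝ) - q = p * Polynomial.X := by rw [hp]; ring
    rw [h1, h2, _root_.map_mul, Polynomial.aeval_X, ← Matrix.mulVec_mulVec, hTx]
  set z : Fin (k+1) → ℝ := fun i => (x - w) (Fin.castLE hk i) with hzdef
  have hext_eq : ext0 z = x - w := by
    funext j
    by_cases hj : (j : ℕ) < k + 1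
    · have hjj : Fin.castLE hk ⟨(j : ℕ), hj⟩ = j := by apply Fin.ext; simp
      have := hext_cast z ⟨(j : ℕ), hj⟩
      rw [hjj] at this
      rw [this, hzdef]
      simp only []
      rw [hjj]
    · rw [hext_zero z j (by omega), hxw]
      exact (hy_supp j (by omega)).symm
  have hxsub : x - ext0 z = w := by rw [hext_eq, sub_sub_cancel]
  -- spectral bound
  have hA : T.IsHermitian := hTpd.1
  have hbound : ∀ i, hA.eigenvalues i ∈ Set.Icc a b := by
    intro i
    refine heig (hA.eigenvalues i) (⇑(hA.eigenvectorBasis i)) ?_ (hA.mulVec_eigenvectorBasis i)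
    intro hcontra
    apply hA.eigenvectorBasis.orthonormal.ne_zero i
    have := congrArg (WithLp.equiv 2 (Fin m → ℝ)).symm hcontra
    simpa using this
  have main2 := spectral_bound T hA a b
    (2 * ((Real.sqrt (b/a) - 1) / (Real.sqrt (b/a) + 1)) ^ (k+1)) ha.le hbound q hqbound x
  have step1 := stepA z
  rw [hxsub] at step1
  rw [← hwdef] at main2
  -- Cauchy-Schwarz piece
  have hxTx2 : x ⬝ᵥ T.mulVec x = e1m ⬝ᵥ x := by rw [hsymdot, hTx]
  have hCS : e1m ⬝ᵥ x ≤ vecEnorm x := by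
    have h := real_inner_le_norm ((WithLp.equiv 2 (Fin m → ℝ)).symm e1m)
      ((WithLp.equiv 2 (Fin m → ℝ)).symm x)
    have hinner : (inner ℝ ((WithLp.equiv 2 (Fin m → ℝ)).symm e1m)
        ((WithLp.equiv 2 (Fin m → ℝ)).symm x) : ℝ) = e1m ⬝ᵥ x := by
      simp only [PiLp.inner_apply, RCLike.inner_apply, starRingEnd_apply, star_trivial]
      exact Finset.sum_congr rfl fun _ _ => mul_comm _ _
    have hnorm1 : ‖(WithLp.equiv 2 (Fin m → ℝ)).symm e1m‖ = 1 := by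
      rw [EuclideanSpace.norm_eq]
      have hsum1 : ∑ i : Fin m, ‖(WithLp.equiv 2 (Fin m → ℝ)).symm e1m i‖ ^ 2 = 1 := by
        rw [Finset.sum_eq_single (⟨0, hm0⟩ : Fin m)]
        · show ‖e1m ⟨0, hm0⟩‖ ^ 2 = 1
          rw [he1m]
          norm_num
        · intro i _ hi
          show ‖e1m i‖ ^ 2 = 0
          rw [he1m]
          have : (i : ℕ) ≠ 0 := by
            intro h0
            apply hi
            apply Fin.ext
            exact h0
          simp [this]
        · intro habs
          exact absurd (Finset.mem_univ _) habs
      rw [hsum1, Real.sqrt_one]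
    rw [hinner, hnorm1, one_mul] at h
    exact h
  -- final chain
  set ρ : ℝ := (Real.sqrt (b/a) - 1) / (Real.sqrt (b/a) + 1) with hρdef
  have hρsq : (2 * ρ ^ (k+1)) ^ 2 = 4 * ρ ^ (2 * (k+1)) := by
    rw [mul_pow, ← pow_mul, mul_comm (k+1) 2]
    norm_num
  have hρnn : (0 : ℝ) ≤ ρ ^ (2 * (k+1)) := by
    rw [mul_comm, pow_mul]
    positivity
  calc e1m ⬝ᵥ x - e1k ⬝ᵥ Tk⁻¹.mulVec e1k = e1m ⬝ᵥ x - e1k ⬝ᵥ z0 := by rw [hz0def]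
    _ ≤ w ⬝ᵥ T.mulVec w := step1
    _ ≤ (2 * ρ ^ (k+1)) ^ 2 * (x ⬝ᵥ T.mulVec x) := main2
    _ = 4 * ρ ^ (2 * (k+1)) * (e1m ⬝ᵥ x) := by rw [hρsq, hxTx2]
    _ ≤ 4 * ρ ^ (2 * (k+1)) * vecEnorm x := by
        apply mul_le_mul_of_nonneg_left hCS (by positivity)
    _ = 4 * vecEnorm x * ρ ^ (2 * (k+1)) := by ring
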